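/- arXiv:2303.11522 — 3 statements merged into one kernel-verified Lean document; each statement's English description precedes it below -/
import Mathlib

section
/- Consider a single supplier whose cost function at each period is c₁(x) = x²/8 or c₂(x) = x²/16, each with probability 1/2, and a fixed demand d = 1. Define the per-period expected total regret at price p ≥ 0 as R(p) = (1/2)·[r₁(p) + r₂(p)], where for cost cᵢ with equilibrium price pᵢ* and optimal production xᵢ*(p) (the maximizer of p·x − cᵢ(x) over x ≥ 0), rᵢ(p) = (p·xᵢ*(p) − pᵢ*·1) + (cᵢ(xᵢ*(p)) − cᵢ(1)) + max(1 − xᵢ*(p), 0). Then for every p ≥ 0, R(p) ≥ 7/64. -/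
/-- Impossibility example: with costs c₁(x)=x²/8 (so x₁*(p)=4p, p₁*=1/4) and
c₂(x)=x²/16 (so x₂*(p)=8p, p₂*=1/8), each with probability 1/2 and demand d=1,
the expected per-period total regret at any price p ≥ 0 is at least 7/64. -/
theorem expected_total_regret_lower_bound (p : ℝ) (hp : 0 ≤ p) :
    (1/2) * ((p * (4*p) - (1/4) * 1 + ((4*p)^2/8 - 1^2/8) + max (1 - 4*p) 0)
           + (p * (8*p) - (1/8) * 1 + ((8*p)^2/16 - 1^2/16) + max (1 - 8*p) 0))
      ≥ 7/64 := by
  rcases le_total (1 - 4*p) 0 with h1 | h1 <;> rcases le_total (1 - 8*p) 0 with h2 | h2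
  · rw [max_eq_right h1, max_eq_right h2]; nlinarith [sq_nonneg (p - 1/8)]
  · rw [max_eq_right h1, max_eq_left h2]; nlinarith [sq_nonneg (p - 1/8)]
  · rw [max_eq_left h1, max_eq_right h2]; nlinarith [sq_nonneg (p - 1/8)]
  · rw [max_eq_left h1, max_eq_left h2]; nlinarith [sq_nonneg (p - 1/8)]
end

section
/- With the setup of the previous statement (R(p) = (1/2)(r₁(p)+r₂(p)) with x₁*(p)=4p, p₁*=1/4, x₂*(p)=8p, p₂*=1/8), the following closed forms hold: R(p) = 9p² − 6p + 23/32 for 0 ≤ p < 1/8; R(p) = 9p² − 2p + 7/32 for 1/8 ≤ p ≤ 1/4; and R(p) = 9p² − 9/32 for p > 1/4. Moreover, the minimum of R over [0, ∞) equals 7/64, attained at p = 1/8. -/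
/-- Closed forms for the expected total regret R(p) in the impossibility example,
and its minimum value 7/64 attained at p = 1/8. -/
theorem expected_total_regret_closed_form :
    let R : ℝ → ℝ := fun p =>
      (1/2) * ((p * (4*p) - (1/4) * 1 + ((4*p)^2/8 - 1^2/8) + max (1 - 4*p) 0)
             + (p * (8*p) - (1/8) * 1 + ((8*p)^2/16 - 1^2/16) + max (1 - 8*p) 0))
    (∀ p : ℝ, 0 ≤ p → p < 1/8 → R p = 9*p^2 - 6*p + 23/32) ∧
    (∀ p : ℝ, 1/8 ≤ p → p ≤ 1/4 → R p = 9*p^2 - 2*p + 7/32) ∧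
    (∀ p : ℝ, 1/4 < p → R p = 9*p^2 - 9/32) ∧
    IsLeast (R '' Set.Ici 0) (7/64) ∧ R (1/8) = 7/64 := by
  intro R
  have hval : R (1/8) = 7/64 := by
    show (1:ℝ)/2 * _ = 7/64
    norm_num
  refine ⟨?_, ?_, ?_, ⟨⟨1/8, by norm_num, hval⟩, ?_⟩, hval⟩
  · intro p _ hp
    show (1:ℝ)/2 * _ = _
    rw [max_eq_left (by linarith), max_eq_left (by linarith)]
    ring
  · intro p h1 h2
    show (1:ℝ)/2 * _ = _
    rw [max_eq_left (by linarith), max_eq_right (by linarith)]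
    ring
  · intro p hp
    show (1:ℝ)/2 * _ = _
    rw [max_eq_right (by linarith), max_eq_right (by linarith)]
    ring
  · rintro y ⟨p, hp, rfl⟩
    simp only [Set.mem_Ici] at hp
    show (7:ℝ)/64 ≤ 1/2 * _
    rcases le_or_gt (1-4*p) 0 with h4 | h4
    · rw [max_eq_right h4]
      rcases le_or_gt (1-8*p) 0 with h8 | h8
      · rw [max_eq_right h8]; nlinarith [sq_nonneg p]
      · rw [max_eq_left h8.le]; nlinarith [sq_nonneg (p - 1/8)]
    · rw [max_eq_left h4.le]
      rcases le_or_gt (1-8*p) 0 with h8 | h8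
      · rw [max_eq_right h8]; nlinarith [sq_nonneg (p - 1/8)]
      · rw [max_eq_left h8.le]; nlinarith [sq_nonneg (p - 1/8)]
end

section
/- Let (Xₜ)ₜ₌₁..T be a sequence of random variables adapted to a filtration (𝔉ₜ) with 0 ≤ Xₜ ≤ R almost surely. Then for every δ ∈ (0,1), with probability at least 1 − δ: ∑ₜ E[Xₜ | 𝔉ₜ₋₁] ≤ 2·∑ₜ Xₜ + 8R·log(2/δ). -/
/-!
After normalising by `R`, the process
`Zₙ = exp (∑_{t<n} (𝔼[X_{t+1} | ℱ_t] / (2R) - X_{t+1} / R))`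
is a supermartingale: since `e^{-x} ≤ 1 - x/2 ≤ e^{-x/2}` for `x ∈ [0, 1]`,
`𝔼[e^{-X_{t+1}/R} | ℱ_t] ≤ exp (-𝔼[X_{t+1} | ℱ_t] / (2R))`.
Hence `𝔼 Z_T ≤ Z_0 = 1`, so by Markov's inequality `Z_T < 1/δ` with probability at least `1 - δ`,
and taking logarithms, on that event `∑ 𝔼[X_{t+1} | ℱ_t] ≤ 2 ∑ X_{t+1} + 2R log(1/δ)`.
-/

open MeasureTheory Real

lemma Real.exp_neg_le_one_sub_half {x : ℝ} (h0 : 0 ≤ x) (h1 : x ≤ 1) :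
    exp (-x) ≤ 1 - x / 2 := by
  have hx : 0 < 1 + x := by linarith
  calc exp (-x) = (exp x)⁻¹ := exp_neg x
    _ ≤ (1 + x)⁻¹ := inv_anti₀ hx (by linarith [add_one_le_exp x])
    _ ≤ 1 - x / 2 := by rw [inv_le_iff_one_le_mul₀ hx]; nlinarith

section

variable {Ω : Type*} {m m0 : MeasurableSpace Ω} {μ : Measure Ω}

lemma integrable_of_ae_nonneg_of_ae_le [IsFiniteMeasure μ] {f : Ω → ℝ} {c : ℝ}
    (hf : AEStronglyMeasurable f μ) (h0 : 0 ≤ᵐ[μ] f) (hc : f ≤ᵐ[μ] fun _ => c) :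
    Integrable f μ :=
  Integrable.of_bound hf c <| by
    filter_upwards [h0, hc] with ω h0 hc
    rwa [Real.norm_of_nonneg h0]

lemma integrable_exp_neg_div [IsFiniteMeasure μ] {Y : Ω → ℝ} {R : ℝ} (hR : 0 ≤ R)
    (hY : AEStronglyMeasurable Y μ) (h0 : 0 ≤ᵐ[μ] Y) :
    Integrable (fun ω => exp (-(Y ω / R))) μ :=
  integrable_of_ae_nonneg_of_ae_le (by fun_prop) (ae_of_all _ fun _ => (exp_pos _).le) <| by
    filter_upwards [h0] with ω h0
    exact exp_le_one_iff.2 (neg_nonpos.2 (div_nonneg h0 hR))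

lemma condExp_le_const [IsFiniteMeasure μ] (hm : m ≤ m0) {Y : Ω → ℝ} {c : ℝ}
    (hY : Integrable Y μ) (hc : Y ≤ᵐ[μ] fun _ => c) :
    μ[Y | m] ≤ᵐ[μ] fun _ => c := by
  simpa only [condExp_const hm c] using condExp_mono (m := m) hY (integrable_const c) hc

theorem condExp_exp_neg_div_le [IsFiniteMeasure μ] (hm : m ≤ m0) {Y : Ω → ℝ} {R : ℝ}
    (hR : 0 < R) (hY : Integrable Y μ) (h0 : 0 ≤ᵐ[μ] Y) (hYR : Y ≤ᵐ[μ] fun _ => R) :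
    μ[fun ω => exp (-(Y ω / R)) | m] ≤ᵐ[μ] fun ω => exp (-(μ[Y | m] ω / (2 * R))) := by
  have h_chord : (fun ω => exp (-(Y ω / R))) ≤ᵐ[μ] (fun _ => 1) - (2 * R)⁻¹ • Y := by
    filter_upwards [h0, hYR] with ω h0 h1
    calc exp (-(Y ω / R)) ≤ 1 - Y ω / R / 2 :=
          exp_neg_le_one_sub_half (div_nonneg h0 hR.le) ((div_le_one hR).2 h1)
      _ = 1 - (2 * R)⁻¹ * Y ω := by ring
  have h_affine :
      μ[(fun _ => 1) - (2 * R)⁻¹ • Y | m] =ᵐ[μ] (fun _ => 1) - (2 * R)⁻¹ • μ[Y | m] := by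
    filter_upwards [condExp_sub (integrable_const 1) (hY.smul (2 * R)⁻¹) m,
      condExp_smul (μ := μ) (2 * R)⁻¹ Y m] with ω h_sub h_smul
    rw [h_sub, Pi.sub_apply, condExp_const hm, Pi.sub_apply, h_smul]
  filter_upwards [condExp_mono (m := m) (integrable_exp_neg_div hR.le hY.1 h0)
    ((integrable_const 1).sub (hY.smul _)) h_chord, h_affine] with ω h_mono h_eq
  rw [h_eq, Pi.sub_apply, Pi.smul_apply, smul_eq_mul] at h_mono
  rw [div_eq_inv_mul]
  linarith [one_sub_le_exp_neg ((2 * R)⁻¹ * μ[Y | m] ω)]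

lemma measure_inv_le_le_of_integral_le_one [IsFiniteMeasure μ] {f : Ω → ℝ}
    (hf0 : 0 ≤ᵐ[μ] f) (hf : Integrable f μ) (hf1 : ∫ ω, f ω ∂μ ≤ 1) {δ : ℝ} (hδ : 0 < δ) :
    μ {ω | δ⁻¹ ≤ f ω} ≤ ENNReal.ofReal δ := by
  have h_markov := (mul_meas_ge_le_integral_of_nonneg hf0 hf δ⁻¹).trans hf1
  rw [inv_mul_le_iff₀ hδ, mul_one] at h_markov
  exact (ENNReal.le_ofReal_iff_toReal_le (measure_ne_top μ _) hδ.le).2 h_markov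

lemma ofReal_one_sub_le_measure_compl [IsProbabilityMeasure μ] {s : Set Ω} {δ : ℝ}
    (hδ : 0 ≤ δ) (hs : μ s ≤ ENNReal.ofReal δ) : ENNReal.ofReal (1 - δ) ≤ μ sᶜ :=
  calc ENNReal.ofReal (1 - δ) = 1 - ENNReal.ofReal δ := by
        rw [ENNReal.ofReal_sub _ hδ, ENNReal.ofReal_one]
    _ ≤ 1 - μ s := tsub_le_tsub_left hs 1
    _ ≤ μ sᶜ := tsub_le_iff_left.2 (measure_univ (μ := μ) ▸ measure_univ_le_add_compl s)

end

section

variable {Ω : Type*} {m0 : MeasurableSpace Ω} {μ : Measure Ω} {ℱ : Filtration ℕ m0}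
  {X : ℕ → Ω → ℝ} {R : ℝ}

noncomputable def compensatedExp (μ : Measure Ω) (ℱ : Filtration ℕ m0) (X : ℕ → Ω → ℝ)
    (R : ℝ) (n : ℕ) (ω : Ω) : ℝ :=
  exp (∑ t ∈ Finset.range n, (μ[X (t + 1) | ℱ t] ω / (2 * R) - X (t + 1) ω / R))

@[simp]
lemma compensatedExp_zero : compensatedExp μ ℱ X R 0 = 1 := by
  ext ω
  simp [compensatedExp]

lemma compensatedExp_succ (n : ℕ) (ω : Ω) :
    compensatedExp μ ℱ X R (n + 1) ω =
      compensatedExp μ ℱ X R n ω * exp (μ[X (n + 1) | ℱ n] ω / (2 * R)) *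
        exp (-(X (n + 1) ω / R)) := by
  simp only [compensatedExp, Finset.sum_range_succ, ← exp_add, sub_eq_add_neg, add_assoc]

lemma compensatedExp_pos (n : ℕ) (ω : Ω) : 0 < compensatedExp μ ℱ X R n ω := exp_pos _

lemma stronglyAdapted_compensatedExp (hX : Adapted ℱ X) :
    StronglyAdapted ℱ (compensatedExp μ ℱ X R) := by
  intro n
  refine continuous_exp.comp_stronglyMeasurable (Finset.stronglyMeasurable_fun_sum _ ?_)
  intro t ht
  have htn : t < n := Finset.mem_range.1 ht
  have hC : StronglyMeasurable[ℱ n] (μ[X (t + 1) | ℱ t]) :=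
    stronglyMeasurable_condExp.mono (ℱ.mono htn.le)
  exact ((hC.measurable.div_const _).sub ((hX.measurable_le htn).div_const _)).stronglyMeasurable

lemma ae_compensatedExp_le [IsFiniteMeasure μ] (hR : 0 < R) (hX : Adapted ℱ X)
    (h0 : ∀ t, 0 ≤ᵐ[μ] X t) (hXR : ∀ t, X t ≤ᵐ[μ] fun _ => R) (n : ℕ) :
    ∀ᵐ ω ∂μ, compensatedExp μ ℱ X R n ω ≤ exp (n / 2) := by
  have hC : ∀ t, μ[X (t + 1) | ℱ t] ≤ᵐ[μ] fun _ => R := fun t =>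
    condExp_le_const (ℱ.le t)
      (integrable_of_ae_nonneg_of_ae_le hX.measurable.aestronglyMeasurable (h0 _) (hXR _)) (hXR _)
  filter_upwards [ae_all_iff.2 hC, ae_all_iff.2 h0] with ω hC h0
  rw [compensatedExp, exp_le_exp]
  calc ∑ t ∈ Finset.range n, (μ[X (t + 1) | ℱ t] ω / (2 * R) - X (t + 1) ω / R)
      ≤ ∑ t ∈ Finset.range n, (1 / 2 : ℝ) := by
        refine Finset.sum_le_sum fun t _ => ?_
        have hXt : 0 ≤ X (t + 1) ω / R := div_nonneg (h0 _) hR.le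
        have hCt : μ[X (t + 1) | ℱ t] ω / (2 * R) ≤ 1 / 2 := by
          rw [div_le_div_iff₀ (by positivity) two_pos]
          linarith [hC t]
        linarith
    _ = n / 2 := by rw [Finset.sum_const, Finset.card_range, nsmul_eq_mul]; ring

lemma integrable_compensatedExp [IsFiniteMeasure μ] (hR : 0 < R) (hX : Adapted ℱ X)
    (h0 : ∀ t, 0 ≤ᵐ[μ] X t) (hXR : ∀ t, X t ≤ᵐ[μ] fun _ => R) (n : ℕ) :
    Integrable (compensatedExp μ ℱ X R n) μ :=
  integrable_of_ae_nonneg_of_ae_le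
    ((stronglyAdapted_compensatedExp hX).stronglyMeasurable (i := n)).aestronglyMeasurable
    (ae_of_all _ fun ω => (compensatedExp_pos n ω).le) (ae_compensatedExp_le hR hX h0 hXR n)

theorem supermartingale_compensatedExp [IsFiniteMeasure μ] (hR : 0 < R) (hX : Adapted ℱ X)
    (h0 : ∀ t, 0 ≤ᵐ[μ] X t) (hXR : ∀ t, X t ≤ᵐ[μ] fun _ => R) :
    Supermartingale (compensatedExp μ ℱ X R) ℱ μ := by
  refine supermartingale_nat (stronglyAdapted_compensatedExp hX)
    (integrable_compensatedExp hR hX h0 hXR) fun n => ?_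
  set C := μ[X (n + 1) | ℱ n]
  set F : Ω → ℝ := fun ω => compensatedExp μ ℱ X R n ω * exp (C ω / (2 * R))
  have hF : StronglyMeasurable[ℱ n] F :=
    (stronglyAdapted_compensatedExp hX n).mul (continuous_exp.comp_stronglyMeasurable
      (stronglyMeasurable_condExp.measurable.div_const _).stronglyMeasurable)
  have h_succ : compensatedExp μ ℱ X R (n + 1) = F * fun ω => exp (-(X (n + 1) ω / R)) :=
    funext (compensatedExp_succ n)
  have hXn : Integrable (X (n + 1)) μ :=
    integrable_of_ae_nonneg_of_ae_le hX.measurable.aestronglyMeasurable (h0 _) (hXR _)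
  rw [h_succ]
  filter_upwards [condExp_mul_of_stronglyMeasurable_left hF
      (h_succ ▸ integrable_compensatedExp hR hX h0 hXR (n + 1))
      (integrable_exp_neg_div hR.le hXn.1 (h0 _)),
    condExp_exp_neg_div_le (ℱ.le n) hR hXn (h0 _) (hXR _)] with ω h_pull h_step
  calc μ[F * fun ω => exp (-(X (n + 1) ω / R)) | ℱ n] ω
      = F ω * μ[fun ω => exp (-(X (n + 1) ω / R)) | ℱ n] ω := h_pull
    _ ≤ F ω * exp (-(C ω / (2 * R))) :=
        mul_le_mul_of_nonneg_left h_step (mul_pos (compensatedExp_pos n ω) (exp_pos _)).le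
    _ = compensatedExp μ ℱ X R n ω := by
        rw [mul_assoc, ← exp_add, add_neg_cancel, exp_zero, mul_one]

lemma integral_compensatedExp_le_one [IsProbabilityMeasure μ] (hR : 0 < R) (hX : Adapted ℱ X)
    (h0 : ∀ t, 0 ≤ᵐ[μ] X t) (hXR : ∀ t, X t ≤ᵐ[μ] fun _ => R) (n : ℕ) :
    ∫ ω, compensatedExp μ ℱ X R n ω ∂μ ≤ 1 := by
  simpa using (supermartingale_compensatedExp hR hX h0 hXR).setIntegral_le (Nat.zero_le n)
    MeasurableSet.univ

lemma sum_condExp_le_of_compensatedExp_lt {δ : ℝ} {T : ℕ} {ω : Ω} (hR : 0 < R) (hδ : 0 < δ)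
    (h : compensatedExp μ ℱ X R T ω < δ⁻¹) :
    ∑ t ∈ Finset.range T, μ[X (t + 1) | ℱ t] ω ≤
      2 * ∑ t ∈ Finset.range T, X (t + 1) ω + 2 * R * log δ⁻¹ := by
  rw [compensatedExp, ← lt_log_iff_exp_lt (inv_pos.2 hδ), Finset.sum_sub_distrib,
    ← Finset.sum_div, ← Finset.sum_div, sub_lt_iff_lt_add, div_lt_iff₀ (by positivity)] at h
  have h_rescale : (∑ t ∈ Finset.range T, X (t + 1) ω) / R * (2 * R) =
      2 * ∑ t ∈ Finset.range T, X (t + 1) ω := by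
    field_simp
  linarith

end

/-- Freedman-type inequality: for an adapted sequence with 0 ≤ Xₜ ≤ R a.s., with
probability at least 1 − δ, the sum of conditional expectations is at most twice
the realized sum plus 8R·log(2/δ). -/
theorem freedman_conditional_sum_bound
    {Ω : Type*} {m0 : MeasurableSpace Ω} (μ : Measure Ω) [IsProbabilityMeasure μ]
    (ℱ : Filtration ℕ m0) (X : ℕ → Ω → ℝ) (R : ℝ) (hR : 0 < R) (T : ℕ)
    (hadapted : Adapted ℱ X)
    (hnonneg : ∀ t, 0 ≤ᵐ[μ] X t) (hbdd : ∀ t, X t ≤ᵐ[μ] fun _ => R)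
    (δ : ℝ) (hδ : δ ∈ Set.Ioo (0:ℝ) 1) :
    ENNReal.ofReal (1 - δ) ≤
      μ {ω | ∑ t ∈ Finset.range T, (μ[X (t+1) | ℱ t]) ω
              ≤ 2 * ∑ t ∈ Finset.range T, X (t+1) ω + 8 * R * Real.log (2 / δ)} := by
  obtain ⟨hδ0, hδ1⟩ := hδ
  have h_tail : μ {ω | δ⁻¹ ≤ compensatedExp μ ℱ X R T ω} ≤ ENNReal.ofReal δ :=
    measure_inv_le_le_of_integral_le_one (ae_of_all _ fun ω => (compensatedExp_pos T ω).le)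
      (integrable_compensatedExp hR hadapted hnonneg hbdd T)
      (integral_compensatedExp_le_one hR hadapted hnonneg hbdd T) hδ0
  have h_log : log δ⁻¹ ≤ log (2 / δ) :=
    log_le_log (inv_pos.2 hδ0) (by rw [inv_eq_one_div]; gcongr; norm_num)
  have h_log_nonneg : 0 ≤ log (2 / δ) := log_nonneg (by rw [le_div_iff₀ hδ0]; linarith)
  have h_slack : 2 * R * log δ⁻¹ ≤ 8 * R * log (2 / δ) := by nlinarith
  refine (ofReal_one_sub_le_measure_compl hδ0.le h_tail).trans (measure_mono fun ω hω => ?_)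
  exact (sum_condExp_le_of_compensatedExp_lt hR hδ0 (not_le.1 hω)).trans (by linarith)
end
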